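/- arXiv:1912.00341 — 3 statements merged into one kernel-verified Lean document; each statement's English description precedes it below -/
import Mathlib

section
/- Let g = ⊕_{i∈Z} g(i) be a Z-grading of a simple Lie algebra g induced by a simple root α (so g(0) is a maximal Levi subalgebra with one-dimensional center). For any k ≥ 1, the subalgebra g^[k] = ⊕_{i∈Z} g(ki) is semisimple, and its root system relative to the common Cartan subalgebra t ⊆ g(0) is ⊔_{i∈Z} Δ_α(ki). -/
/-!
Each `G i` is the `i`-eigenspace of `ad h₀`; as `h₀ ∈ t`, every root space `L_β` lies in
`G (β h₀)`. Hence `K` is `t` plus the root spaces with `β h₀ ∈ kℤ`, which gives the root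
statement, and this set of roots is closed under negation.

By Cartan's criterion, `K` is semisimple once it has no nonzero abelian ideal `I`. Being
`t`-stable, `I` is spanned by `t`-weight vectors. A root vector `x ∈ I ∩ L_β` pairs under the
Killing form with some `y ∈ L_{-β} ⊆ K`, and `⁅⁅x, y⁆, x⁆` is a nonzero multiple of `x`,
contradicting commutativity of `I`. A vector `v ∈ I ∩ t` satisfies `(ad v)² K = 0`, hence
`ad v K = 0` because `ad v` is semisimple; so `v` is central in `G 0`, i.e. `v = c • h₀`, and
`⁅v, G k⁆ = 0` forces `c = 0`.
-/

open LieAlgebra LieModule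

namespace Module.End

variable {R M ι : Type*} [CommRing R] [IsDomain R] [AddCommGroup M] [Module R M]
  [IsTorsionFree R M]

theorem eigenspace_eq_of_iSup_eq_top {f : End R M} {μ : ι → R} (hμ : Function.Injective μ)
    {G : ι → Submodule R M} (htop : ⨆ i, G i = ⊤) (hG : ∀ i, ∀ x ∈ G i, f x = μ i • x)
    (i : ι) : G i = f.eigenspace (μ i) := by
  refine congrFun (((f.eigenspaces_iSupIndep.comp hμ).le_iff_eq_of_iSup_eq_top htop).mp
    fun j x hx => ?_) i
  exact mem_eigenspace_iff.mpr (hG j x hx)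

theorem mem_of_mem_eigenspace_of_mem_biSup {f : End R M} {s : Set R} {c : R} {x : M}
    (hc : x ∈ f.eigenspace c) (hs : x ∈ ⨆ μ ∈ s, f.eigenspace μ) (hx : x ≠ 0) : c ∈ s := by
  by_contra hcs
  exact hx ((Submodule.disjoint_def.mp (f.eigenspaces_iSupIndep.disjoint_biSup hcs)) x hc hs)

end Module.End

theorem Module.End.IsSemisimple.apply_eq_zero_of_apply_apply_eq_zero {R M : Type*} [CommRing R]
    [AddCommGroup M] [Module R M] {f : Module.End R M} (hf : f.IsSemisimple) {x : M}
    (hx : f (f x) = 0) : f x = 0 := by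
  have hmax : x ∈ f.maxGenEigenspace 0 :=
    (f.mem_maxGenEigenspace 0 x).mpr ⟨2, by simpa [pow_two] using hx⟩
  rw [hf.isFinitelySemisimple.maxGenEigenspace_eq_eigenspace, Module.End.mem_eigenspace_iff,
    zero_smul] at hmax
  exact hmax

section Subalgebra

variable {R L : Type*} [CommRing R] [LieRing L] [LieAlgebra R L]

def LieIdeal.restrOfLE {H K : LieSubalgebra R L} (hHK : H ≤ K) (I : LieIdeal R K) :
    LieSubmodule R H L where
  carrier := {x | ∃ a ∈ I, (a : L) = x}
  add_mem' := by
    rintro _ _ ⟨a, ha, rfl⟩ ⟨b, hb, rfl⟩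
    exact ⟨a + b, add_mem ha hb, rfl⟩
  zero_mem' := ⟨0, zero_mem I, rfl⟩
  smul_mem' := by
    rintro c _ ⟨a, ha, rfl⟩
    exact ⟨c • a, I.smul_mem c ha, rfl⟩
  lie_mem := by
    rintro h _ ⟨a, ha, rfl⟩
    exact ⟨⁅⟨h, hHK h.2⟩, a⁆, I.lie_mem ha, rfl⟩

theorem LieIdeal.lie_eq_zero_of_mem {K : Type*} [LieRing K] [LieAlgebra R K] {I : LieIdeal R K}
    [hI : IsLieAbelian I] {a b : K} (ha : a ∈ I) (hb : b ∈ I) : ⁅a, b⁆ = 0 := by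
  have h := LieSubmodule.lie_mem_lie ha hb
  rwa [(LieSubmodule.lie_abelian_iff_lie_self_eq_bot I).mp hI, LieSubmodule.mem_bot] at h

namespace LieAlgebra.IsKilling

variable {𝕜 : Type*} [Field 𝕜] [CharZero 𝕜] [LieAlgebra 𝕜 L] [FiniteDimensional 𝕜 L]
  [IsKilling 𝕜 L] {H K : LieSubalgebra 𝕜 L} [H.IsCartanSubalgebra] {I : LieIdeal 𝕜 K}
  [IsLieAbelian I] [IsTriangularizable 𝕜 H L]

theorem eq_zero_of_mem_rootSpace_of_rootSpace_neg_le {β : Weight 𝕜 H L} (hβ : β.IsNonZero)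
    (hK : (rootSpace H (-β)).toSubmodule ≤ K.toSubmodule) {x : K} (hxI : x ∈ I)
    (hx : (x : L) ∈ rootSpace H β) : x = 0 := by
  by_contra hx0
  obtain ⟨y, hy, hxy⟩ : ∃ y ∈ rootSpace H (-β), killingForm 𝕜 L x y ≠ 0 := by
    by_contra! h
    have := mem_ker_killingForm_of_mem_rootSpace_of_forall_rootSpace_neg 𝕜 L H hx h
    rw [ker_killingForm_eq_bot, Submodule.mem_bot, ZeroMemClass.coe_eq_zero] at this
    exact hx0 this
  have hxyI : ⁅x, (⟨y, hK hy⟩ : K)⁆ ∈ I := lie_mem_left _ _ I _ _ hxI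
  -- `⁅x, y⁆` is a nonzero multiple of the coroot of `β`, which does not commute with `x`
  have hcomm : ⁅⁅(x : L), y⁆, (x : L)⁆ = 0 := by
    simpa using congrArg Subtype.val (LieIdeal.lie_eq_zero_of_mem hxyI hxI)
  have hux : ⁅((cartanEquivDual H).symm β : L), (x : L)⁆ =
      β ((cartanEquivDual H).symm β) • (x : L) := lie_eq_smul_of_mem_rootSpace hx _
  rw [lie_eq_killingForm_smul_of_mem_rootSpace_of_mem_rootSpace_neg hx hy, smul_lie, hux] at hcomm
  simp only [smul_eq_zero, hxy, root_apply_cartanEquivDual_symm_ne_zero hβ,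
    ZeroMemClass.coe_eq_zero, hx0, or_self] at hcomm

theorem lie_eq_zero_of_mem_cartan {v : K} (hvI : v ∈ I) (hv : (v : L) ∈ H) (y : K) :
    ⁅v, y⁆ = 0 := by
  have hvy : ⁅v, ⁅v, y⁆⁆ = 0 := LieIdeal.lie_eq_zero_of_mem hvI (lie_mem_left _ _ I _ _ hvI)
  have := (isSemisimple_ad_of_mem_isCartanSubalgebra hv).apply_eq_zero_of_apply_apply_eq_zero
    (x := (y : L)) (by simpa using congrArg Subtype.val hvy)
  exact Subtype.ext (by simpa using this)

theorem hasTrivialRadical_of_rootSpace_neg_le (hHK : H ≤ K)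
    (hneg : ∀ β : Weight 𝕜 H L, β.IsNonZero → ∀ x ∈ rootSpace H β, x ∈ K → x ≠ 0 →
      (rootSpace H (-β)).toSubmodule ≤ K.toSubmodule)
    (hcent : ∀ v ∈ H, (∀ y ∈ K, ⁅v, y⁆ = 0) → v = 0) : HasTrivialRadical 𝕜 K := by
  rw [hasTrivialRadical_iff_no_abelian_ideals]
  intro I _
  have hS : I.restrOfLE hHK = ⊥ := by
    rw [eq_iSup_inf_genWeightSpace 𝕜 H L (I.restrOfLE hHK), iSup_eq_bot]
    intro β
    rw [eq_bot_iff]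
    rintro _ ⟨⟨a, haI, rfl⟩, haβ⟩
    rw [LieSubmodule.mem_bot]
    by_cases hβ : β.IsZero
    · have haH : (a : L) ∈ H := by
        have : (a : L) ∈ rootSpace H 0 := by rwa [← hβ.eq]
        rwa [rootSpace_zero_eq] at this
      refine hcent _ haH fun y hy => ?_
      simpa using congrArg Subtype.val (lie_eq_zero_of_mem_cartan haI haH ⟨y, hy⟩)
    · by_contra ha0
      exact ha0 (congrArg Subtype.val (eq_zero_of_mem_rootSpace_of_rootSpace_neg_le hβ
        (hneg β hβ a haβ a.2 ha0) haI haβ))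
  rw [eq_bot_iff]
  intro a haI
  have : (a : L) ∈ I.restrOfLE hHK := ⟨a, haI, rfl⟩
  rw [hS, LieSubmodule.mem_bot, ZeroMemClass.coe_eq_zero] at this
  rw [LieSubmodule.mem_bot]
  exact this

end LieAlgebra.IsKilling

end Subalgebra

section Grading

variable {𝕜 L : Type*} [Field 𝕜] [CharZero 𝕜] [LieRing L] [LieAlgebra 𝕜 L]
  {G : ℤ → Submodule 𝕜 L} {h₀ : L}

theorem eq_eigenspace_ad_of_grading (htop : ⨆ i, G i = ⊤)
    (hgrad : ∀ i : ℤ, ∀ x ∈ G i, ⁅h₀, x⁆ = (i : 𝕜) • x) (i : ℤ) :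
    G i = (ad 𝕜 L h₀).eigenspace (i : 𝕜) :=
  Module.End.eigenspace_eq_of_iSup_eq_top Int.cast_injective htop hgrad i

theorem exists_mem_grading_of_mem_iSup (htop : ⨆ i, G i = ⊤)
    (hgrad : ∀ i : ℤ, ∀ x ∈ G i, ⁅h₀, x⁆ = (i : 𝕜) • x) {k : ℤ} {x : L}
    (hx : x ∈ ⨆ i, G (k * i)) (hx0 : x ≠ 0) {c : 𝕜} (hc : ⁅h₀, x⁆ = c • x) :
    ∃ i : ℤ, c = ((k * i : ℤ) : 𝕜) ∧ x ∈ G (k * i) := by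
  have hE := eq_eigenspace_ad_of_grading htop hgrad
  have hxc : x ∈ (ad 𝕜 L h₀).eigenspace c := Module.End.mem_eigenspace_iff.mpr hc
  replace hx :
      x ∈ ⨆ μ ∈ Set.range (fun i : ℤ => ((k * i : ℤ) : 𝕜)), (ad 𝕜 L h₀).eigenspace μ := by
    rwa [iSup_range, ← funext fun i => hE (k * i)]
  obtain ⟨i, rfl⟩ := Module.End.mem_of_mem_eigenspace_of_mem_biSup hxc hx hx0
  exact ⟨i, rfl, (hE _).symm ▸ hxc⟩

theorem rootSpace_le_grading [FiniteDimensional 𝕜 L] [IsKilling 𝕜 L] {t : LieSubalgebra 𝕜 L}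
    [t.IsCartanSubalgebra] [IsTriangularizable 𝕜 t L] (htop : ⨆ i, G i = ⊤)
    (hgrad : ∀ i : ℤ, ∀ x ∈ G i, ⁅h₀, x⁆ = (i : 𝕜) • x) (hh₀t : h₀ ∈ t) {β : t → 𝕜} {m : ℤ}
    (hm : β ⟨h₀, hh₀t⟩ = m) : (rootSpace t β).toSubmodule ≤ G m := fun x hx => by
  rw [eq_eigenspace_ad_of_grading htop hgrad, Module.End.mem_eigenspace_iff, ← hm]
  exact IsKilling.lie_eq_smul_of_mem_rootSpace hx ⟨h₀, hh₀t⟩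

theorem eq_zero_of_centralizes_grading (hgrad : ∀ i : ℤ, ∀ x ∈ G i, ⁅h₀, x⁆ = (i : 𝕜) • x)
    (hcen : ∀ x ∈ G 0, (∀ y ∈ G 0, ⁅x, y⁆ = 0) → ∃ c : 𝕜, x = c • h₀) {k : ℤ} (hk : k ≠ 0)
    (hGk : G k ≠ ⊥) {v : L} (hv : v ∈ G 0) (hv0 : ∀ y ∈ G 0, ⁅v, y⁆ = 0)
    (hvk : ∀ y ∈ G k, ⁅v, y⁆ = 0) : v = 0 := by
  obtain ⟨c, rfl⟩ := hcen v hv hv0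
  obtain ⟨y, hy, hy0⟩ := Submodule.exists_mem_ne_zero_of_ne_bot hGk
  have := hvk y hy
  rw [smul_lie, hgrad k y hy, smul_smul] at this
  simp_all

end Grading

theorem gk_semisimple_and_roots_general
    (L : Type*) [LieRing L] [LieAlgebra ℂ L] [FiniteDimensional ℂ L]
    [LieAlgebra.IsSimple ℂ L]
    (G : ℤ → Submodule ℂ L)
    (hdec : DirectSum.IsInternal G)
    (t : LieSubalgebra ℂ L) [t.IsCartanSubalgebra]
    (ht0 : t.toSubmodule ≤ G 0)
    (h₀ : L) (hh₀t : h₀ ∈ t)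
    (hgrad : ∀ i : ℤ, ∀ x ∈ G i, ⁅h₀, x⁆ = (i : ℂ) • x)
    (hcen : ∀ x ∈ G 0, (∀ y ∈ G 0, ⁅x, y⁆ = 0) → ∃ c : ℂ, x = c • h₀)
    (k : ℕ) (hk : 1 ≤ k) (hGk : G (k : ℤ) ≠ ⊥)
    (K : LieSubalgebra ℂ L)
    (hK : K.toSubmodule = ⨆ i : ℤ, G ((k : ℤ) * i)) :
    LieAlgebra.IsSemisimple ℂ K ∧
    ∀ χ : t → ℂ, χ ≠ 0 →
      ((∃ x : L, x ≠ 0 ∧ x ∈ K ∧ ∀ h : t, ⁅(h : L), x⁆ = χ h • x) ↔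
       (∃ i : ℤ, ∃ x : L, x ≠ 0 ∧ x ∈ G ((k : ℤ) * i) ∧
          ∀ h : t, ⁅(h : L), x⁆ = χ h • x)) := by
  have htop := hdec.submodule_iSup_eq_top
  have hKG (i : ℤ) : G (k * i) ≤ K.toSubmodule := hK ▸ le_iSup (fun i => G (k * i)) i
  have hdeg {x : L} (hxK : x ∈ K) (hx0 : x ≠ 0) {c : ℂ} (hc : ⁅h₀, x⁆ = c • x) :
      ∃ i : ℤ, c = ((k * i : ℤ) : ℂ) ∧ x ∈ G (k * i) :=
    exists_mem_grading_of_mem_iSup htop hgrad (hK ▸ hxK) hx0 hc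
  have hneg (β : Weight ℂ t L) (_ : β.IsNonZero) (x : L) (hxβ : x ∈ rootSpace t β)
      (hxK : x ∈ K) (hx0 : x ≠ 0) : (rootSpace t (-β)).toSubmodule ≤ K.toSubmodule := by
    obtain ⟨i, hi, -⟩ := hdeg hxK hx0 (IsKilling.lie_eq_smul_of_mem_rootSpace hxβ ⟨h₀, hh₀t⟩)
    refine (rootSpace_le_grading htop hgrad hh₀t (m := k * -i) ?_).trans (hKG (-i))
    simp [hi]
  have hcent (v : L) (hv : v ∈ t) (hvK : ∀ y ∈ K, ⁅v, y⁆ = 0) : v = 0 :=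
    eq_zero_of_centralizes_grading hgrad hcen (k := k) (by omega) hGk (ht0 hv)
      (fun y hy => hvK y (hKG 0 (by simpa using hy)))
      (fun y hy => hvK y (hKG 1 (by simpa using hy)))
  refine ⟨?_, fun χ _ => ⟨?_, ?_⟩⟩
  · have := IsKilling.hasTrivialRadical_of_rootSpace_neg_le
      (fun x hx => hKG 0 (by simpa using ht0 hx)) hneg hcent
    infer_instance
  · rintro ⟨x, hx0, hxK, hχ⟩
    obtain ⟨i, -, hxG⟩ := hdeg hxK hx0 (hχ ⟨h₀, hh₀t⟩)
    exact ⟨i, x, hx0, hxG, hχ⟩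
  · rintro ⟨i, x, hx0, hxG, hχ⟩
    exact ⟨x, hx0, hKG i hxG, hχ⟩

/-- Let `g = ⊕ᵢ g(i)` be the `ℤ`-grading of a complex simple Lie
algebra induced by a simple root (so `g(0)` is a maximal Levi subalgebra whose
one-dimensional centre is spanned by a grading element `h₀`, acting on `g(i)` with
eigenvalue `i`, and the grading is generated by the degree `±1` parts).  For `k ≥ 1`,
the subalgebra `g^[k] = ⊕ᵢ g(k·i)` is semisimple, and its root spaces relative to the
common Cartan subalgebra `t ⊆ g(0)` are exactly the root spaces of `g` lying in the
pieces `g(k·i)`, i.e. its root system is `⊔ᵢ Δ_α(k·i)`. -/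
theorem gk_semisimple_and_roots
    (L : Type*) [LieRing L] [LieAlgebra ℂ L] [FiniteDimensional ℂ L]
    [LieAlgebra.IsSimple ℂ L]
    (G : ℤ → Submodule ℂ L)
    (hdec : DirectSum.IsInternal G)
    (hbr : ∀ i j : ℤ, ∀ x ∈ G i, ∀ y ∈ G j, ⁅x, y⁆ ∈ G (i + j))
    (t : LieSubalgebra ℂ L) [t.IsCartanSubalgebra]
    (ht0 : t.toSubmodule ≤ G 0)
    (h₀ : L) (hh₀t : h₀ ∈ t)
    (hgrad : ∀ i : ℤ, ∀ x ∈ G i, ⁅h₀, x⁆ = (i : ℂ) • x)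
    (hcen : ∀ x ∈ G 0, (∀ y ∈ G 0, ⁅x, y⁆ = 0) → ∃ c : ℂ, x = c • h₀)
    (hgenpos : ∀ i : ℤ, 1 ≤ i →
      G (i + 1) = Submodule.span ℂ {z : L | ∃ x ∈ G 1, ∃ y ∈ G i, ⁅x, y⁆ = z})
    (hgenneg : ∀ i : ℤ, i ≤ -1 →
      G (i - 1) = Submodule.span ℂ {z : L | ∃ x ∈ G (-1), ∃ y ∈ G i, ⁅x, y⁆ = z})
    (k : ℕ) (hk : 1 ≤ k) (hGk : G (k : ℤ) ≠ ⊥)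
    (K : LieSubalgebra ℂ L)
    (hK : K.toSubmodule = ⨆ i : ℤ, G ((k : ℤ) * i)) :
    LieAlgebra.IsSemisimple ℂ K ∧
    ∀ χ : t → ℂ, χ ≠ 0 →
      ((∃ x : L, x ≠ 0 ∧ x ∈ K ∧ ∀ h : t, ⁅(h : L), x⁆ = χ h • x) ↔
       (∃ i : ℤ, ∃ x : L, x ≠ 0 ∧ x ∈ G ((k : ℤ) * i) ∧
          ∀ h : t, ⁅(h : L), x⁆ = χ h • x)) :=
  gk_semisimple_and_roots_general L G hdec t ht0 h₀ hh₀t hgrad hcen k hk hGk K hK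
end

section
/- Let g be simple with (Z,α)-grading, γ_α(k) = (k/(2h* r_α))·Σ_{i≥1} q_α(ki) the Casimir C_α(0)-eigenvalue on g_α(k), and d = d_α. Then 2γ_α(1) > γ_α(2); moreover, if d is odd then γ_α(1) > γ_α(2). -/
/-!
Write `Σᵢ = ∑_{γ ∈ Δ_α(i)} γ = q(i) ϖ_α`. Pairing with `ϖ_α` gives
`q(i) ⟪ϖ_α, ϖ_α⟫ = i |Δ_α(i)| ⟪α, α⟫ / 2`, so `q(i) ≥ 0`, with `q(1) > 0` (as `α ∈ Δ_α(1)`) and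
`q(d) > 0` (as `θ ∈ Δ_α(d)`). The first claim is then `∑_{i even} q(i) < ∑ᵢ q(i)`.

For the second, pair `Σᵢ` with the highest root `θ` instead: for `0 < i < d` every `γ ∈ Δ_α(i)`
has `⟨γ, θ^∨⟩ ∈ {0, 1}`, so `q(i)` is proportional to the number of such `γ` with
`⟨γ, θ^∨⟩ = 1`, and `γ ↦ θ - γ` matches these up between the levels `i` and `d - i`. Hence
`q(i) = q(d - i)`, and for odd `d` the involution `i ↦ d - i` exchanges the even and the odd
indices below `d`, giving `∑ᵢ q(i) = 2 ∑_{i even} q(i) + q(d)`.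
-/

open scoped RealInnerProductSpace
open scoped Classical

/-- An (irreducible, reduced, crystallographic) root system in a real inner product
space `V`, together with a choice of base (simple roots), coordinate functions with
respect to the base, and fundamental weights. -/
structure RootSystemData (V : Type*) [NormedAddCommGroup V] [InnerProductSpace ℝ V] where
  Δ : Finset V
  base : Finset V
  base_sub : base ⊆ Δ
  root_ne_zero : ∀ γ ∈ Δ, γ ≠ 0
  span_eq_top : Submodule.span ℝ (Δ : Set V) = ⊤
  reflect_mem : ∀ γ ∈ Δ, ∀ δ ∈ Δ, δ - (2 * ⟪δ, γ⟫ / ⟪γ, γ⟫) • γ ∈ Δ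
  crystallographic : ∀ γ ∈ Δ, ∀ δ ∈ Δ, ∃ k : ℤ, 2 * ⟪δ, γ⟫ / ⟪γ, γ⟫ = (k : ℝ)
  reduced : ∀ γ ∈ Δ, (2 : ℝ) • γ ∉ Δ
  coord : V → V → ℝ
  coord_add : ∀ α x y, coord (x + y) α = coord x α + coord y α
  coord_smul : ∀ α (c : ℝ) (x : V), coord (c • x) α = c * coord x α
  coord_base : ∀ α ∈ base, ∀ β ∈ base, coord β α = if β = α then 1 else 0
  root_decomp : ∀ γ ∈ Δ, γ = ∑ α ∈ base, coord γ α • α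
  pos_or_neg : ∀ γ ∈ Δ, (∀ α ∈ base, 0 ≤ coord γ α) ∨ (∀ α ∈ base, coord γ α ≤ 0)
  coord_int : ∀ γ ∈ Δ, ∀ α ∈ base, ∃ k : ℤ, coord γ α = (k : ℝ)
  irreducible : ∀ S ⊆ Δ, S.Nonempty →
    (∀ γ ∈ S, ∀ δ ∈ Δ, δ ∉ S → ⟪γ, δ⟫ = 0) → S = Δ
  fw : V → V
  fw_spec : ∀ α ∈ base, ∀ β ∈ base, ⟪fw α, β⟫ = if β = α then ⟪α, α⟫ / 2 else 0

namespace RootSystemData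

variable {V : Type*} [NormedAddCommGroup V] [InnerProductSpace ℝ V]

/-- The set of positive roots (nonnegative coordinates w.r.t. the base). -/
noncomputable def posRoots (R : RootSystemData V) : Finset V :=
  R.Δ.filter fun γ => ∀ α ∈ R.base, 0 ≤ R.coord γ α

/-- The height of a root: the sum of its coordinates in the base. -/
noncomputable def ht (R : RootSystemData V) (γ : V) : ℝ :=
  ∑ α ∈ R.base, R.coord γ α

/-- The height of the coroot `γ^∨` in the dual root system. -/
noncomputable def dualHt (R : RootSystemData V) (γ : V) : ℝ :=
  ∑ α ∈ R.base, R.coord γ α * ⟪α, α⟫ / ⟪γ, γ⟫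

/-- `R_α`: the set of roots having positive inner product with the fundamental
weight `ϖ_α`. -/
noncomputable def Rset (R : RootSystemData V) (α : V) : Finset V :=
  R.Δ.filter fun γ => 0 < ⟪γ, R.fw α⟫

/-- `Δ_α(i)`: the set of roots whose coefficient of `α` equals `i`. -/
noncomputable def level (R : RootSystemData V) (α : V) (i : ℤ) : Finset V :=
  R.Δ.filter fun γ => R.coord γ α = (i : ℝ)

end RootSystemData

open Finset

namespace RootSystemData

variable {V : Type*} [NormedAddCommGroup V] [InnerProductSpace ℝ V] (R : RootSystemData V)

lemma inner_self_pos {γ : V} (hγ : γ ∈ R.Δ) : 0 < ⟪γ, γ⟫ :=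
  real_inner_self_pos.mpr (R.root_ne_zero γ hγ)

lemma neg_mem {γ : V} (hγ : γ ∈ R.Δ) : -γ ∈ R.Δ := by
  have h := R.reflect_mem γ hγ γ hγ
  rwa [mul_div_cancel_right₀ _ (R.inner_self_pos hγ).ne', two_smul, sub_add_cancel_left] at h

lemma coord_neg (α γ : V) : R.coord (-γ) α = -R.coord γ α := by
  simpa using R.coord_smul α (-1) γ

lemma coord_sub (α x y : V) : R.coord (x - y) α = R.coord x α - R.coord y α := by
  rw [sub_eq_add_neg, R.coord_add, R.coord_neg, sub_eq_add_neg]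

@[simp]
lemma mem_level {α γ : V} {i : ℤ} : γ ∈ R.level α i ↔ γ ∈ R.Δ ∧ R.coord γ α = i := by
  simp [level]

lemma inner_fw {α γ : V} (hα : α ∈ R.base) (hγ : γ ∈ R.Δ) :
    ⟪γ, R.fw α⟫ = R.coord γ α * (⟪α, α⟫ / 2) := by
  conv_lhs => rw [R.root_decomp γ hγ]
  rw [sum_inner, Finset.sum_eq_single α]
  · rw [real_inner_smul_left, real_inner_comm, R.fw_spec α hα α hα, if_pos rfl]
  · intro β hβ hne
    rw [real_inner_smul_left, real_inner_comm, R.fw_spec α hα β hβ, if_neg hne, mul_zero]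
  · exact fun h => absurd hα h

lemma fw_inner_self_pos {α : V} (hα : α ∈ R.base) : 0 < ⟪R.fw α, R.fw α⟫ := by
  refine real_inner_self_pos.mpr fun h0 => ?_
  have h := R.fw_spec α hα α hα
  rw [h0, inner_zero_left, if_pos rfl] at h
  linarith [R.inner_self_pos (R.base_sub hα)]

lemma dualHt_nonneg {γ : V} (hγ : ∀ β ∈ R.base, 0 ≤ R.coord γ β) : 0 ≤ R.dualHt γ :=
  Finset.sum_nonneg fun β hβ =>
    have := R.inner_self_pos (R.base_sub hβ)
    div_nonneg (mul_nonneg (hγ β hβ) this.le) real_inner_self_nonneg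

lemma coeff_mul_inner_fw_self {α : V} (hα : α ∈ R.base) {i : ℤ} {q : ℝ}
    (hq : ∑ γ ∈ R.level α i, γ = q • R.fw α) :
    q * ⟪R.fw α, R.fw α⟫ = #(R.level α i) * (i * (⟪α, α⟫ / 2)) := by
  have h := congrArg (⟪·, R.fw α⟫) hq
  simp only [sum_inner, real_inner_smul_left] at h
  rw [← h, ← nsmul_eq_mul, ← Finset.sum_const]
  refine Finset.sum_congr rfl fun γ hγ => ?_
  rw [mem_level] at hγ
  rw [R.inner_fw hα hγ.1, hγ.2]

lemma coeff_nonneg_of_level_sum_eq_smul_fw {α : V} (hα : α ∈ R.base) {i : ℤ} (hi : 0 ≤ i)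
    {q : ℝ} (hq : ∑ γ ∈ R.level α i, γ = q • R.fw α) : 0 ≤ q := by
  have h := R.coeff_mul_inner_fw_self hα hq
  have := R.inner_self_pos (R.base_sub hα)
  have hiR : (0 : ℝ) ≤ i := by exact_mod_cast hi
  exact nonneg_of_mul_nonneg_left (h ▸ by positivity) (R.fw_inner_self_pos hα)

lemma coeff_pos_of_level_sum_eq_smul_fw {α : V} (hα : α ∈ R.base) {i : ℤ} (hi : 0 < i)
    (hne : (R.level α i).Nonempty) {q : ℝ} (hq : ∑ γ ∈ R.level α i, γ = q • R.fw α) : 0 < q := by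
  have h := R.coeff_mul_inner_fw_self hα hq
  have := R.inner_self_pos (R.base_sub hα)
  have hiR : (0 : ℝ) < i := by exact_mod_cast hi
  have hcard : (0 : ℝ) < #(R.level α i) := by exact_mod_cast hne.card_pos
  exact pos_of_mul_pos_left (h ▸ by positivity) (R.fw_inner_self_pos hα).le

section HighestRoot

variable {θ : V}

lemma one_le_coord_of_highest (hθmax : ∀ γ ∈ R.Δ, ∀ β ∈ R.base, R.coord γ β ≤ R.coord θ β)
    {β : V} (hβ : β ∈ R.base) : 1 ≤ R.coord θ β := by
  simpa [R.coord_base β hβ β hβ] using hθmax β (R.base_sub hβ) β hβ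

lemma abs_coord_le_of_highest (hθmax : ∀ γ ∈ R.Δ, ∀ β ∈ R.base, R.coord γ β ≤ R.coord θ β)
    {β γ : V} (hβ : β ∈ R.base) (hγ : γ ∈ R.Δ) : |R.coord γ β| ≤ R.coord θ β := by
  have := hθmax (-γ) (R.neg_mem hγ) β hβ
  rw [R.coord_neg] at this
  exact abs_le.mpr ⟨by linarith, hθmax γ hγ β hβ⟩

/-- The `θ`-string argument: `γ - kθ` is a root for `k = ⟨γ, θ^∨⟩`, and its `α`-coordinate
`coord γ α - k d` lies in `[-d, d]`, which forces `k ∈ {0, 1}`. -/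
lemma inner_eq_zero_or_two_mul_inner_eq_of_highest (hθ : θ ∈ R.Δ)
    (hθmax : ∀ γ ∈ R.Δ, ∀ β ∈ R.base, R.coord γ β ≤ R.coord θ β)
    {α γ : V} (hα : α ∈ R.base) (hγ : γ ∈ R.Δ)
    (hpos : 0 < R.coord γ α) (hlt : R.coord γ α < R.coord θ α) :
    ⟪γ, θ⟫ = 0 ∨ 2 * ⟪γ, θ⟫ = ⟪θ, θ⟫ := by
  have hθθ := R.inner_self_pos hθ
  obtain ⟨k, hk⟩ := R.crystallographic θ hθ γ hγ
  have hbound := R.abs_coord_le_of_highest hθmax hα (R.reflect_mem θ hθ γ hγ)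
  rw [hk, R.coord_sub, R.coord_smul, abs_le] at hbound
  have hk01 : k = 0 ∨ k = 1 := by
    rcases (by omega : k ≤ -1 ∨ k = 0 ∨ k = 1 ∨ 2 ≤ k) with h | h | h | h
    · have : (k : ℝ) ≤ -1 := by exact_mod_cast h
      nlinarith
    · exact Or.inl h
    · exact Or.inr h
    · have : (2 : ℝ) ≤ k := by exact_mod_cast h
      nlinarith
  rw [div_eq_iff hθθ.ne'] at hk
  rcases hk01 with rfl | rfl
  · left; simpa using hk
  · right; simpa using hk

lemma sum_inner_level_eq_card_mul_of_highest (hθ : θ ∈ R.Δ)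
    (hθmax : ∀ γ ∈ R.Δ, ∀ β ∈ R.base, R.coord γ β ≤ R.coord θ β)
    {α : V} (hα : α ∈ R.base) {i : ℤ} (hi : 0 < i) (hid : (i : ℝ) < R.coord θ α) :
    ∑ γ ∈ R.level α i, ⟪γ, θ⟫
      = #((R.level α i).filter fun γ => 2 * ⟪γ, θ⟫ = ⟪θ, θ⟫) * (⟪θ, θ⟫ / 2) := by
  rw [← nsmul_eq_mul, ← Finset.sum_const, Finset.sum_filter]
  refine Finset.sum_congr rfl fun γ hγ => ?_
  rw [mem_level] at hγ
  have hiR : (0 : ℝ) < i := by exact_mod_cast hi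
  rcases R.inner_eq_zero_or_two_mul_inner_eq_of_highest hθ hθmax hα hγ.1
    (hγ.2 ▸ hiR) (hγ.2 ▸ hid) with h | h
  · rw [h, if_neg (by linarith [R.inner_self_pos hθ])]
  · rw [if_pos h]; linarith

lemma sub_mem_of_two_mul_inner_eq (hθ : θ ∈ R.Δ) {γ : V} (hγ : γ ∈ R.Δ)
    (h : 2 * ⟪γ, θ⟫ = ⟪θ, θ⟫) : θ - γ ∈ R.Δ := by
  have hrefl := R.reflect_mem θ hθ γ hγ
  rw [h, div_self (R.inner_self_pos hθ).ne', one_smul] at hrefl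
  simpa using R.neg_mem hrefl

lemma card_filter_level_eq_card_filter_level_sub (hθ : θ ∈ R.Δ) (α : V) (d i : ℤ)
    (hd : (d : ℝ) = R.coord θ α) :
    #((R.level α i).filter fun γ => 2 * ⟪γ, θ⟫ = ⟪θ, θ⟫)
      = #((R.level α (d - i)).filter fun γ => 2 * ⟪γ, θ⟫ = ⟪θ, θ⟫) := by
  have hmaps : ∀ j : ℤ, Set.MapsTo (θ - ·)
      ((R.level α j).filter fun γ => 2 * ⟪γ, θ⟫ = ⟪θ, θ⟫)
      ((R.level α (d - j)).filter fun γ => 2 * ⟪γ, θ⟫ = ⟪θ, θ⟫) := by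
    intro j γ hγ
    simp only [Finset.coe_filter, mem_level, Set.mem_ofPred_eq] at hγ ⊢
    refine ⟨⟨R.sub_mem_of_two_mul_inner_eq hθ hγ.1.1 hγ.2, ?_⟩, ?_⟩
    · rw [R.coord_sub, hγ.1.2, ← hd]; push_cast; ring
    · rw [inner_sub_left]; linarith [hγ.2]
  refine Finset.card_nbij' (θ - ·) (θ - ·) (hmaps i) ?_ (fun γ _ => sub_sub_cancel θ γ)
    (fun γ _ => sub_sub_cancel θ γ)
  simpa using hmaps (d - i)

lemma coeff_eq_of_level_sum_eq_smul_fw (hθ : θ ∈ R.Δ)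
    (hθmax : ∀ γ ∈ R.Δ, ∀ β ∈ R.base, R.coord γ β ≤ R.coord θ β)
    {α : V} (hα : α ∈ R.base) {d i : ℤ} (hd : (d : ℝ) = R.coord θ α) (hi : 0 < i) (hid : i < d)
    {q q' : ℝ} (hq : ∑ γ ∈ R.level α i, γ = q • R.fw α)
    (hq' : ∑ γ ∈ R.level α (d - i), γ = q' • R.fw α) : q = q' := by
  have hsum : ∀ (j : ℤ) (c : ℝ), ∑ γ ∈ R.level α j, γ = c • R.fw α →
      ∑ γ ∈ R.level α j, ⟪γ, θ⟫ = c * (d * (⟪α, α⟫ / 2)) := by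
    intro j c h
    rw [← sum_inner, h, real_inner_smul_left, real_inner_comm, R.inner_fw hα hθ, hd]
  have hdR : (0 : ℝ) < d := by exact_mod_cast (hi.trans hid)
  have hpos : (0 : ℝ) < d * (⟪α, α⟫ / 2) := by
    have := R.inner_self_pos (R.base_sub hα); positivity
  have hlevel : ∀ j : ℤ, 0 < j → j < d → ∑ γ ∈ R.level α j, ⟪γ, θ⟫
      = #((R.level α j).filter fun γ => 2 * ⟪γ, θ⟫ = ⟪θ, θ⟫) * (⟪θ, θ⟫ / 2) :=
    fun j hj hjd => R.sum_inner_level_eq_card_mul_of_highest hθ hθmax hα hj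
      (hd ▸ by exact_mod_cast hjd)
  refine mul_right_cancel₀ hpos.ne' ?_
  rw [← hsum i q hq, ← hsum (d - i) q' hq', hlevel i hi hid, hlevel (d - i) (by omega) (by omega),
    R.card_filter_level_eq_card_filter_level_sub hθ α d i hd]

end HighestRoot

end RootSystemData

section ParitySums

variable {M : Type*} [AddCommMonoid M] (f : ℕ → M) (d : ℕ)

lemma sum_filter_two_mul_le_eq_sum_filter_even :
    ∑ i ∈ (Icc 1 d).filter (fun i => 2 * i ≤ d), f (2 * i)
      = ∑ j ∈ (Icc 1 d).filter Even, f j := by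
  refine Finset.sum_nbij' (2 * ·) (· / 2) ?_ ?_ ?_ ?_ fun _ _ => rfl <;>
    · intro a ha
      simp only [Finset.mem_filter, Finset.mem_Icc, Nat.even_iff] at ha ⊢
      omega

lemma sum_Icc_eq_two_nsmul_sum_filter_even_add (hd : Odd d)
    (hf : ∀ i, 1 ≤ i → i < d → f i = f (d - i)) :
    ∑ i ∈ Icc 1 d, f i = 2 • ∑ j ∈ (Icc 1 d).filter Even, f j + f d := by
  rw [Nat.odd_iff] at hd
  have hdmem : d ∈ (Icc 1 d).filter (¬Even ·) := by
    simp only [Finset.mem_filter, Finset.mem_Icc, Nat.even_iff]; omega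
  have hswap : ∑ j ∈ (Icc 1 d).filter Even, f j
      = ∑ j ∈ ((Icc 1 d).filter (¬Even ·)).erase d, f j := by
    refine Finset.sum_nbij' (d - ·) (d - ·) (fun a ha => ?_) (fun a ha => ?_) (fun a ha => ?_)
      (fun a ha => ?_) (fun a ha => hf a ?_ ?_) <;>
    · simp only [Finset.mem_erase, Finset.mem_filter, Finset.mem_Icc, Nat.even_iff] at ha ⊢
      omega
  rw [← Finset.sum_filter_add_sum_filter_not _ Even, ← Finset.add_sum_erase _ _ hdmem, ← hswap,
    two_nsmul, add_assoc, add_comm (f d)]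

end ParitySums

lemma sum_filter_even_lt_sum_Icc {f : ℕ → ℝ} (hf : ∀ i, 0 ≤ f i) (hf1 : 0 < f 1) {d : ℕ}
    (hd : 1 ≤ d) : ∑ j ∈ (Icc 1 d).filter Even, f j < ∑ i ∈ Icc 1 d, f i := by
  conv_rhs => rw [← Finset.sum_filter_add_sum_filter_not _ Even]
  rw [lt_add_iff_pos_right]
  exact hf1.trans_le <| Finset.single_le_sum (fun i _ => hf i) <| by
    simpa only [Finset.mem_filter, Finset.mem_Icc, Nat.not_even_one, not_false_eq_true,
      and_true] using ⟨le_rfl, hd⟩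

/-- With `γ_α(k) = (k/(2h* r_α))·Σ_{i≥1} q_α(ki)` the Casimir
eigenvalue on `g_α(k)`, one has `2γ_α(1) > γ_α(2)`; moreover if `d = d_α` is odd then
`γ_α(1) > γ_α(2)`. -/
theorem two_gamma_one_gt_gamma_two
    {V : Type*} [NormedAddCommGroup V] [InnerProductSpace ℝ V]
    (R : RootSystemData V) (α : V) (hα : α ∈ R.base)
    (θ : V) (hθ : θ ∈ R.Δ)
    (hθmax : ∀ γ ∈ R.Δ, ∀ β ∈ R.base, R.coord γ β ≤ R.coord θ β)
    (d : ℕ) (hd : (d : ℝ) = R.coord θ α)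
    (qfun : ℕ → ℝ)
    (hqfun : ∀ i : ℕ, (∑ γ ∈ R.level α (i : ℤ), γ) = qfun i • R.fw α) :
    2 * ((1 / (2 * (R.dualHt θ + 1) * (⟪θ, θ⟫ / ⟪α, α⟫))) * ∑ i ∈ Finset.Icc 1 d, qfun i)
      > (2 / (2 * (R.dualHt θ + 1) * (⟪θ, θ⟫ / ⟪α, α⟫)))
          * ∑ i ∈ (Finset.Icc 1 d).filter (fun i => 2 * i ≤ d), qfun (2 * i) ∧
    (Odd d →
      (1 / (2 * (R.dualHt θ + 1) * (⟪θ, θ⟫ / ⟪α, α⟫))) * ∑ i ∈ Finset.Icc 1 d, qfun i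
        > (2 / (2 * (R.dualHt θ + 1) * (⟪θ, θ⟫ / ⟪α, α⟫)))
            * ∑ i ∈ (Finset.Icc 1 d).filter (fun i => 2 * i ≤ d), qfun (2 * i)) := by
  have hd1 : 1 ≤ d := by exact_mod_cast hd ▸ R.one_le_coord_of_highest hθmax hα
  set C := 2 * (R.dualHt θ + 1) * (⟪θ, θ⟫ / ⟪α, α⟫)
  have hC : 0 < C := by
    have := R.dualHt_nonneg fun β hβ => zero_le_one.trans (R.one_le_coord_of_highest hθmax hβ)
    have := R.inner_self_pos hθ
    have := R.inner_self_pos (R.base_sub hα)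
    positivity
  have hlevel_pos : ∀ i : ℕ, 1 ≤ i → ∀ γ ∈ R.level α i, 0 < qfun i := fun i hi γ hγ =>
    R.coeff_pos_of_level_sum_eq_smul_fw hα (by omega) ⟨γ, hγ⟩ (hqfun i)
  have hq1 : 0 < qfun 1 := hlevel_pos 1 le_rfl α <| by
    simp [R.base_sub hα, R.coord_base α hα α hα]
  have hlt := sum_filter_even_lt_sum_Icc
    (fun i => R.coeff_nonneg_of_level_sum_eq_smul_fw hα (by omega) (hqfun i)) hq1 hd1
  rw [sum_filter_two_mul_le_eq_sum_filter_even]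
  set S := ∑ i ∈ Icc 1 d, qfun i
  set E := ∑ j ∈ (Icc 1 d).filter Even, qfun j
  refine ⟨?_, fun hodd => ?_⟩
  · calc 2 / C * E = 2 * E / C := by ring
      _ < 2 * S / C := by gcongr
      _ = 2 * (1 / C * S) := by ring
  · have hsymm : ∀ i, 1 ≤ i → i < d → qfun i = qfun (d - i) := fun i hi hid =>
      R.coeff_eq_of_level_sum_eq_smul_fw hθ hθmax hα hd (by omega) (by omega) (hqfun i)
        (by simpa [Nat.cast_sub hid.le] using hqfun (d - i))
    have hqd : 0 < qfun d := hlevel_pos d hd1 θ (by simp [hθ, hd])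
    have hsplit := sum_Icc_eq_two_nsmul_sum_filter_even_add qfun d hodd hsymm
    rw [two_nsmul] at hsplit
    calc 2 / C * E = 2 * E / C := by ring
      _ < S / C := by gcongr; linarith
      _ = 1 / C * S := by ring
end

section
/- Let Δ be an irreducible root system, α a simple root, Δ_α(1) the set of roots with α-coefficient 1, and Δ⁺_α(0) the positive roots with α-coefficient 0. Call a subset S ⊆ Δ_α(1) an upper ideal if μ ∈ S and μ + η ∈ Δ for η ∈ Δ⁺_α(0) imply μ + η ∈ S. If two upper ideals S, S' ⊆ Δ_α(1) satisfy |S| = |S'| (equal sums of elements), then S = S'. -/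
open scoped RealInnerProductSpace
open scoped Classical

section Aux

variable {V : Type*} [NormedAddCommGroup V] [InnerProductSpace ℝ V] (R : RootSystemData V)

private lemma aux_inner_self_pos {x : V} (hx : x ≠ 0) : 0 < ⟪x, x⟫ := by
  rcases lt_or_ge 0 ⟪x, x⟫ with h | h
  · exact h
  · exact absurd (real_inner_self_nonpos.mp h) hx

private lemma aux_coord_neg (x β : V) : R.coord (-x) β = - R.coord x β := by
  have := R.coord_smul β (-1) x
  simpa using this

private lemma aux_coord_sub (x y β : V) :
    R.coord (x - y) β = R.coord x β - R.coord y β := by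
  rw [sub_eq_add_neg, R.coord_add, aux_coord_neg]; ring

private lemma aux_neg_mem {γ : V} (h : γ ∈ R.Δ) : -γ ∈ R.Δ := by
  have hne : ⟪γ, γ⟫ ≠ 0 := ne_of_gt (aux_inner_self_pos (R.root_ne_zero γ h))
  have h2 : (2 * ⟪γ, γ⟫ / ⟪γ, γ⟫ : ℝ) = 2 := by field_simp
  have := R.reflect_mem γ h γ h
  rw [h2] at this
  have h3 : γ - (2 : ℝ) • γ = -γ := by
    rw [two_smul]; abel
  rwa [h3] at this

private lemma aux_inner_fw {γ : V} (h : γ ∈ R.Δ) {α : V} (hα : α ∈ R.base) :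
    ⟪γ, R.fw α⟫ = R.coord γ α * (⟪α, α⟫ / 2) := by
  conv_lhs => rw [R.root_decomp γ h]
  rw [sum_inner, Finset.sum_eq_single α]
  · rw [real_inner_smul_left, real_inner_comm, R.fw_spec α hα α hα, if_pos rfl]
  · intro β hβ hne
    rw [real_inner_smul_left, real_inner_comm, R.fw_spec α hα β hβ, if_neg hne, mul_zero]
  · intro h'; exact absurd hα h'

private lemma aux_sub_mem {μ ν : V} (hμ : μ ∈ R.Δ) (hν : ν ∈ R.Δ)
    (hp : 0 < ⟪μ, ν⟫) (hne : μ ≠ ν) : μ - ν ∈ R.Δ := by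
  have ha : 0 < ⟪μ, μ⟫ := aux_inner_self_pos (R.root_ne_zero μ hμ)
  have hb : 0 < ⟪ν, ν⟫ := aux_inner_self_pos (R.root_ne_zero ν hν)
  obtain ⟨k, hk⟩ := R.crystallographic ν hν μ hμ
  obtain ⟨k', hk'⟩ := R.crystallographic μ hμ ν hν
  have hνμ : ⟪ν, μ⟫ = ⟪μ, ν⟫ := (real_inner_comm ν μ).symm
  have hkpos : 0 < (k : ℝ) := by
    rw [← hk]; positivity
  have hk'pos : 0 < (k' : ℝ) := by
    rw [← hk', hνμ]; positivity
  have hk1 : (1 : ℤ) ≤ k := by exact_mod_cast hkpos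
  have hk'1 : (1 : ℤ) ≤ k' := by exact_mod_cast hk'pos
  rcases eq_or_lt_of_le hk1 with h1 | h1
  · -- k = 1 : reflect μ in ν
    have := R.reflect_mem ν hν μ hμ
    rw [hk, ← h1] at this
    simpa using this
  rcases eq_or_lt_of_le hk'1 with h1' | h1'
  · -- k' = 1 : reflect ν in μ, then negate
    have := R.reflect_mem μ hμ ν hν
    rw [hk', ← h1'] at this
    have h2 := aux_neg_mem R (by simpa using this)
    rwa [neg_sub] at h2
  -- k ≥ 2 and k' ≥ 2 : contradiction
  exfalso
  have hk2 : (2 : ℝ) ≤ (k : ℝ) := by exact_mod_cast h1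
  have hk'2 : (2 : ℝ) ≤ (k' : ℝ) := by exact_mod_cast h1'
  rw [← hk] at hk2
  rw [← hk', hνμ] at hk'2
  -- p ≥ b and p ≥ a
  rw [le_div_iff₀ hb] at hk2
  rw [le_div_iff₀ ha] at hk'2
  have hpb : ⟪ν, ν⟫ ≤ ⟪μ, ν⟫ := by linarith
  have hpa : ⟪μ, μ⟫ ≤ ⟪μ, ν⟫ := by linarith
  have hcs := real_inner_mul_inner_self_le μ ν
  have hap : ⟪μ, μ⟫ = ⟪μ, ν⟫ := by nlinarith
  have hbp : ⟪ν, ν⟫ = ⟪μ, ν⟫ := by nlinarith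
  have : ⟪μ - ν, μ - ν⟫ = 0 := by
    rw [inner_sub_sub_self, hνμ, hap, hbp]; ring
  have := real_inner_self_nonpos.mp this.le
  exact hne (sub_eq_zero.mp this)

private lemma aux_key (α : V) (hα : α ∈ R.base)
    (S S' : Finset V)
    (hS : S ⊆ R.level α 1) (hS' : S' ⊆ R.level α 1)
    (hup : ∀ μ ∈ S, ∀ η ∈ R.posRoots, R.coord η α = 0 → μ + η ∈ R.Δ → μ + η ∈ S)
    (hup' : ∀ μ ∈ S', ∀ η ∈ R.posRoots, R.coord η α = 0 → μ + η ∈ R.Δ → μ + η ∈ S')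
    (hsum : (∑ γ ∈ S, γ) = ∑ γ ∈ S', γ)
    (hA : (S \ S').Nonempty) : False := by
  classical
  have hαΔ : α ∈ R.Δ := R.base_sub hα
  have hαpos : 0 < ⟪α, α⟫ := aux_inner_self_pos (R.root_ne_zero α hαΔ)
  -- facts about level membership
  have hlev : ∀ γ ∈ R.level α 1, γ ∈ R.Δ ∧ R.coord γ α = 1 := by
    intro γ hγ
    rw [RootSystemData.level, Finset.mem_filter] at hγ
    exact ⟨hγ.1, by exact_mod_cast hγ.2⟩
  -- sums over the symmetric differences are equal
  have hAB : (∑ γ ∈ S \ S', γ) = ∑ γ ∈ S' \ S, γ := by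
    have h1 := Finset.sum_inter_add_sum_sdiff S S' (fun γ => γ)
    have h2 := Finset.sum_inter_add_sum_sdiff S' S (fun γ => γ)
    rw [Finset.inter_comm] at h2
    have := h1.trans (hsum.trans h2.symm)
    exact add_left_cancel this
  set x := ∑ γ ∈ S \ S', γ with hx
  have hxne : x ≠ 0 := by
    intro h0
    have : ⟪x, R.fw α⟫ = 0 := by rw [h0, inner_zero_left]
    rw [hx, sum_inner] at this
    have heach : ∀ γ ∈ S \ S', ⟪γ, R.fw α⟫ = ⟪α, α⟫ / 2 := by
      intro γ hγ
      obtain ⟨hγΔ, hγ1⟩ := hlev γ (hS (Finset.mem_sdiff.mp hγ).1)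
      rw [aux_inner_fw R hγΔ hα, hγ1, one_mul]
    rw [Finset.sum_congr rfl heach, Finset.sum_const, nsmul_eq_mul] at this
    have hcard : 0 < (S \ S').card := Finset.card_pos.mpr hA
    have : (0 : ℝ) < ((S \ S').card : ℝ) * (⟪α, α⟫ / 2) := by positivity
    linarith [this]
  have hxx : 0 < ⟪x, x⟫ := aux_inner_self_pos hxne
  -- find a positively-paired pair
  have hpair : ∃ μ ∈ S \ S', ∃ ν ∈ S' \ S, 0 < ⟪μ, ν⟫ := by
    by_contra hcon
    push_neg at hcon
    have : ⟪x, ∑ γ ∈ S' \ S, γ⟫ ≤ 0 := by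
      rw [hx, sum_inner]
      apply Finset.sum_nonpos
      intro μ hμ
      rw [inner_sum]
      exact Finset.sum_nonpos fun ν hν => hcon μ hμ ν hν
    rw [← hAB] at this
    linarith
  obtain ⟨μ, hμ, ν, hν, hpos⟩ := hpair
  rw [Finset.mem_sdiff] at hμ hν
  obtain ⟨hμΔ, hμ1⟩ := hlev μ (hS hμ.1)
  obtain ⟨hνΔ, hν1⟩ := hlev ν (hS' hν.1)
  have hmn : μ ≠ ν := fun h => hμ.2 (h ▸ hν.1)
  have hη : ν - μ ∈ R.Δ := aux_sub_mem R hνΔ hμΔ (by rwa [real_inner_comm]) (Ne.symm hmn)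
  have hη0 : R.coord (ν - μ) α = 0 := by
    rw [aux_coord_sub, hμ1, hν1]; ring
  rcases R.pos_or_neg (ν - μ) hη with hposη | hnegη
  · -- ν - μ is positive: μ + (ν - μ) = ν ∈ S, contradiction
    have hmem : ν - μ ∈ R.posRoots := by
      rw [RootSystemData.posRoots, Finset.mem_filter]
      exact ⟨hη, hposη⟩
    have heq : μ + (ν - μ) = ν := by abel
    have := hup μ hμ.1 (ν - μ) hmem hη0 (by rwa [heq])
    rw [heq] at this
    exact hν.2 this
  · -- μ - ν is positive: ν + (μ - ν) = μ ∈ S', contradiction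
    have hη' : μ - ν ∈ R.Δ := by
      have := aux_neg_mem R hη
      rwa [neg_sub] at this
    have hmem : μ - ν ∈ R.posRoots := by
      rw [RootSystemData.posRoots, Finset.mem_filter]
      refine ⟨hη', fun β hβ => ?_⟩
      have := hnegη β hβ
      have h1 : μ - ν = -(ν - μ) := by abel
      rw [h1, aux_coord_neg]
      linarith
    have heq : ν + (μ - ν) = μ := by abel
    have hη0' : R.coord (μ - ν) α = 0 := by
      rw [aux_coord_sub, hμ1, hν1]; ring
    have := hup' ν hν.1 (μ - ν) hmem hη0' (by rwa [heq])
    rw [heq] at this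
    exact hμ.2 this

end Aux

/-- Two upper ideals of `Δ_α(1)` (with respect to adding positive
roots of `α`-coordinate `0`) with equal sums of elements coincide. -/
theorem upper_ideal_eq_of_sum_eq
    {V : Type*} [NormedAddCommGroup V] [InnerProductSpace ℝ V]
    (R : RootSystemData V) (α : V) (hα : α ∈ R.base)
    (S S' : Finset V)
    (hS : S ⊆ R.level α 1) (hS' : S' ⊆ R.level α 1)
    (hup : ∀ μ ∈ S, ∀ η ∈ R.posRoots, R.coord η α = 0 → μ + η ∈ R.Δ → μ + η ∈ S)
    (hup' : ∀ μ ∈ S', ∀ η ∈ R.posRoots, R.coord η α = 0 → μ + η ∈ R.Δ → μ + η ∈ S')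
    (hsum : (∑ γ ∈ S, γ) = ∑ γ ∈ S', γ) :
    S = S' := by
  by_contra hne
  rcases (S \ S').eq_empty_or_nonempty with hA | hA
  · have hsub : S ⊆ S' := Finset.sdiff_eq_empty_iff_subset.mp hA
    have hB : (S' \ S).Nonempty := by
      rcases (S' \ S).eq_empty_or_nonempty with hB | hB
      · exact absurd (Finset.Subset.antisymm hsub (Finset.sdiff_eq_empty_iff_subset.mp hB)) hne
      · exact hB
    exact aux_key R α hα S' S hS' hS hup' hup hsum.symm hB
  · exact aux_key R α hα S S' hS hS' hup hup' hsum hA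
end
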